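/- arXiv:2304.02456 — 2 statements merged into one kernel-verified Lean document; each statement's English description precedes it below -/
import Mathlib

section
/- The dynamical subequivalence relation is transitive: if U, V, W are open subsets of X with U ≼_G V and V ≼_G W, then U ≼_G W. -/
open scoped Pointwise
/-- `U` is dynamically subequivalent to `V` for the action of `G` on `X`. -/
def DynSubequiv (G : Type*) [Group G] {X : Type*} [TopologicalSpace X] [MulAction G X]
    (U V : Set X) : Prop :=
  ∀ K : Set X, IsCompact K → K ⊆ U →
    ∃ (n : ℕ) (Us : Fin n → Set X) (g : Fin n → G),
      (∀ i, IsOpen (Us i)) ∧ K ⊆ ⋃ i, Us i ∧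
      (∀ i, g i • Us i ⊆ V) ∧
      Pairwise fun i j => Disjoint (g i • Us i) (g j • Us j)

theorem dynSubequiv_trans {G X : Type*} [Group G] [Countable G] [TopologicalSpace X]
    [CompactSpace X] [TopologicalSpace.MetrizableSpace X] [MulAction G X]
    [ContinuousConstSMul G X] {U V W : Set X}
    (hU : IsOpen U) (hV : IsOpen V) (hW : IsOpen W)
    (h1 : DynSubequiv G U V) (h2 : DynSubequiv G V W) :
    DynSubequiv G U W := by
  letI := TopologicalSpace.metrizableSpaceMetric X
  intro K hK hKU
  obtain ⟨n, Us, g, hUsOpen, hKcov, hUsV, hdisj⟩ := h1 K hK hKU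
  obtain ⟨Ks, hKsC, hKsU, hKeq⟩ := hK.finite_compact_cover Finset.univ Us
    (fun i _ => hUsOpen i) (by simpa using hKcov)
  set L : Set X := ⋃ i, g i • Ks i with hL
  have hLc : IsCompact L := isCompact_iUnion fun i => (hKsC i).smul _
  have hLV : L ⊆ V := Set.iUnion_subset fun i =>
    (Set.smul_set_mono (hKsU i)).trans (hUsV i)
  obtain ⟨m, Vs, hg, hVsOpen, hLcov, hVsW, hdisj2⟩ := h2 L hLc hLV
  let e : Fin n × Fin m ≃ Fin (n * m) := finProdFinEquiv
  let T : Fin n × Fin m → Set X := fun p => Us p.1 ∩ (g p.1)⁻¹ • Vs p.2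
  let G' : Fin n × Fin m → G := fun p => hg p.2 * g p.1
  have hTeq : ∀ p, G' p • T p = hg p.2 • ((g p.1 • Us p.1) ∩ Vs p.2) := by
    intro p
    show (hg p.2 * g p.1) • _ = _
    rw [mul_smul, Set.smul_set_inter, smul_inv_smul]
  refine ⟨n * m, T ∘ e.symm, G' ∘ e.symm, ?_, ?_, ?_, ?_⟩
  · intro i
    exact ((hUsOpen _).inter ((hVsOpen _).smul _))
  · intro x hx
    have hx' : x ∈ ⋃ i ∈ Finset.univ, Ks i := hKeq ▸ hx
    simp only [Finset.mem_univ, Set.iUnion_true, Set.mem_iUnion] at hx'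
    obtain ⟨i, hxi⟩ := hx'
    have : (g i) • x ∈ L := Set.mem_iUnion.2 ⟨i, Set.smul_mem_smul_set hxi⟩
    obtain ⟨j, hj⟩ := Set.mem_iUnion.1 (hLcov this)
    refine Set.mem_iUnion.2 ⟨e (i, j), ?_⟩
    simp only [Function.comp_apply, Equiv.symm_apply_apply]
    exact ⟨hKsU i hxi, Set.mem_smul_set_iff_inv_smul_mem.2 (by simpa using hj)⟩
  · intro i
    simp only [Function.comp_apply]
    rw [hTeq]
    exact (Set.smul_set_mono Set.inter_subset_right).trans (hVsW _)
  · intro i j hij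
    simp only [Function.comp_apply]
    rw [hTeq, hTeq]
    set p := e.symm i
    set q := e.symm j
    have hpq : p ≠ q := fun h => hij (by simpa [p, q] using congrArg e h)
    rcases eq_or_ne p.2 q.2 with h2 | h2
    · have h1' : p.1 ≠ q.1 := fun h => hpq (Prod.ext h h2)
      rw [h2]
      rw [Set.disjoint_smul_set]
      exact (hdisj h1').mono Set.inter_subset_left Set.inter_subset_left
    · exact (hdisj2 h2).mono
        (Set.smul_set_mono Set.inter_subset_right)
        (Set.smul_set_mono Set.inter_subset_right)
end

section
/- Every free action of a finite group G on a compact metrizable zero-dimensional space X admits a clopen fundamental domain: there exists a clopen set V ⊆ X such that X is the disjoint union of the sets gV for g ∈ G. -/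
/-!
Every point `x` has a clopen neighbourhood whose translates are pairwise disjoint: separate `x`
from each of its finitely many translates `g • x ≠ x` and shrink to a clopen set. Two such
wandering sets `V`, `W` merge into the single wandering set `V ∪ (W \ ⋃ g, g • V)`, whose
translates cover those of both, so compactness yields one clopen wandering set whose
translates cover `X`.
-/

open scoped Pointwise Topology
open Set Filter

section WanderingSet

variable (G : Type*) {X : Type*} [Group G] [MulAction G X]

def IsWanderingSet (V : Set X) : Prop :=
  Pairwise fun g g' : G => Disjoint (g • V) (g' • V)

variable {G} {V W : Set X}

theorem isWanderingSet_iff : IsWanderingSet G V ↔ ∀ g : G, g ≠ 1 → Disjoint (g • V) V := by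
  refine ⟨fun h g hg => by simpa using h hg, fun h g g' hgg' => ?_⟩
  have hne : g'⁻¹ * g ≠ 1 := fun h => hgg' (inv_mul_eq_one.1 h).symm
  simpa [smul_smul] using (disjoint_smul_set (a := g')).2 (h _ hne)

theorem isWanderingSet_empty : IsWanderingSet G (∅ : Set X) :=
  fun _ _ _ => by simp

theorem IsWanderingSet.mono (hW : IsWanderingSet G W) (hVW : V ⊆ W) : IsWanderingSet G V :=
  fun _ _ hgg' => (hW hgg').mono (smul_set_mono hVW) (smul_set_mono hVW)

theorem smul_iUnion_smul (a : G) (V : Set X) : a • ⋃ g : G, g • V = ⋃ g : G, g • V := by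
  simp only [smul_set_iUnion, smul_smul]
  exact (Equiv.mulLeft a).iSup_comp (g := fun g : G => g • V)

theorem iUnion_smul_union_diff_iUnion_smul :
    ⋃ g : G, g • (V ∪ (W \ ⋃ h : G, h • V)) = (⋃ g : G, g • V) ∪ ⋃ g : G, g • W := by
  simp only [smul_set_union, smul_set_sdiff, smul_iUnion_smul, iUnion_union_distrib,
    ← iUnion_sdiff, union_sdiff_self]

theorem IsWanderingSet.union_diff_iUnion_smul (hV : IsWanderingSet G V)
    (hW : IsWanderingSet G W) : IsWanderingSet G (V ∪ (W \ ⋃ h : G, h • V)) := by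
  rw [isWanderingSet_iff] at hV hW ⊢
  intro g hg
  rw [smul_set_union, smul_set_sdiff, smul_iUnion_smul, disjoint_union_left,
    disjoint_union_right, disjoint_union_right]
  -- The cross terms vanish because `⋃ h, h • V` is invariant and contains `V` and `g • V`.
  refine ⟨⟨hV g hg, ?_⟩, ?_, (hW g hg).mono sdiff_subset sdiff_subset⟩
  · exact disjoint_sdiff_right.mono_left (subset_iUnion (fun h : G => h • V) g)
  · exact disjoint_sdiff_left.mono_right (subset_iUnion_of_subset 1 (one_smul G V).ge)

end WanderingSet

section Topological

variable {G X : Type*} [Group G] [MulAction G X] [TopologicalSpace X] [ContinuousConstSMul G X]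

theorem IsClopen.iUnion_smul [Finite G] {V : Set X} (hV : IsClopen V) :
    IsClopen (⋃ g : G, g • V) :=
  isClopen_iUnion_of_finite fun g => ⟨hV.isClosed.smul g, hV.isOpen.smul g⟩

theorem exists_mem_nhds_disjoint_smul [T2Space X] {g : G} {x : X} (hgx : g • x ≠ x) :
    ∃ N ∈ 𝓝 x, Disjoint (g • N) N := by
  obtain ⟨A, hA, B, hB, hAB⟩ := Filter.disjoint_iff.1 (disjoint_nhds_nhds.2 hgx)
  have hA' : g⁻¹ • A ∈ 𝓝 x := by rwa [← smul_mem_nhds_smul_iff g, smul_inv_smul]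
  refine ⟨B ∩ g⁻¹ • A, inter_mem hB hA', hAB.mono ?_ inter_subset_left⟩
  exact (smul_set_mono inter_subset_right).trans (smul_inv_smul g A).le

theorem exists_isWanderingSet_mem_nhds [T2Space X] [Finite G] {x : X}
    (hx : ∀ g : G, g • x = x → g = 1) : ∃ N ∈ 𝓝 x, IsWanderingSet G N := by
  have hsmall : ∀ g : G, ∀ᶠ N in (𝓝 x).smallSets, g ≠ 1 → Disjoint (g • N) N := by
    intro g
    by_cases hg : g = 1
    · exact Eventually.of_forall fun _ h => absurd hg h
    obtain ⟨N, hN, hgN⟩ := exists_mem_nhds_disjoint_smul fun h => hg (hx g h)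
    exact eventually_smallSets.2
      ⟨N, hN, fun M hMN _ => hgN.mono (smul_set_mono hMN) hMN⟩
  obtain ⟨N, hN, hwand⟩ := eventually_smallSets.1 (eventually_all.2 hsmall)
  exact ⟨N, hN, isWanderingSet_iff.2 (hwand N subset_rfl)⟩

theorem exists_isClopen_isWanderingSet_mem_nhds [T2Space X] [CompactSpace X]
    [TotallyDisconnectedSpace X] [Finite G] {x : X} (hx : ∀ g : G, g • x = x → g = 1) :
    ∃ U ∈ 𝓝 x, IsClopen U ∧ IsWanderingSet G U := by
  obtain ⟨N, hN, hwand⟩ := exists_isWanderingSet_mem_nhds hx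
  obtain ⟨U, ⟨hxU, hU⟩, hUN⟩ := (nhds_basis_clopen x).mem_iff.1 hN
  exact ⟨U, hU.isOpen.mem_nhds hxU, hU, hwand.mono hUN⟩

theorem IsCompact.exists_isClopen_isWanderingSet_subset_iUnion_smul [Finite G] {s : Set X}
    (hs : IsCompact s) (hloc : ∀ x ∈ s, ∃ U ∈ 𝓝 x, IsClopen U ∧ IsWanderingSet G U) :
    ∃ V : Set X, IsClopen V ∧ IsWanderingSet G V ∧ s ⊆ ⋃ g : G, g • V := by
  refine hs.induction_on ⟨∅, isClopen_empty, isWanderingSet_empty, by simp⟩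
    (fun t u htu ⟨V, hV, hwand, hu⟩ => ⟨V, hV, hwand, htu.trans hu⟩) ?_ ?_
  · rintro t u ⟨V, hV, hVwand, ht⟩ ⟨W, hW, hWwand, hu⟩
    refine ⟨V ∪ (W \ ⋃ g : G, g • V), hV.union (hW.diff hV.iUnion_smul),
      hVwand.union_diff_iUnion_smul hWwand, ?_⟩
    rw [iUnion_smul_union_diff_iUnion_smul]
    exact union_subset_union ht hu
  · intro x hxs
    obtain ⟨U, hUx, hU, hwand⟩ := hloc x hxs
    exact ⟨U, mem_nhdsWithin_of_mem_nhds hUx, U, hU, hwand,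
      fun y hy => mem_iUnion.2 ⟨1, by rwa [one_smul]⟩⟩

end Topological

theorem free_finite_action_fundamental_domain {G X : Type*} [Group G] [Finite G]
    [TopologicalSpace X] [CompactSpace X] [TopologicalSpace.MetrizableSpace X]
    [TotallyDisconnectedSpace X] [MulAction G X] [ContinuousConstSMul G X]
    (hfree : ∀ (g : G) (x : X), g • x = x → g = 1) :
    ∃ V : Set X, IsClopen V ∧ (⋃ g : G, g • V) = Set.univ ∧
      Pairwise fun g g' : G => Disjoint (g • V) (g' • V) := by
  obtain ⟨V, hV, hwand, hcover⟩ :=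
    isCompact_univ.exists_isClopen_isWanderingSet_subset_iUnion_smul fun x _ =>
      exists_isClopen_isWanderingSet_mem_nhds (G := G) (hfree · x)
  exact ⟨V, hV, univ_subset_iff.1 hcover, hwand⟩
end
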